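/- Let F be a field and V a finite-dimensional F-vector space, and let D be an F[X]-linear endomorphism of V[X] := PolynomialModule F V with D ∘ D = 0. Define d₀ : V → V by d₀(x) := the degree-0 coefficient of D(ι x), where ι : V → V[X] is the inclusion as constant polynomials. Then d₀ ∘ d₀ = 0, and dim_F (ker d₀ / im d₀) ≥ rank_{F[X]} (ker D / im D), where the rank of a finitely generated F[X]-module H is dim_{F(X)} (F(X) ⊗_{F[X]} H). -/

import Mathlib

/-!
Over the principal ideal domain `F[X]` the module `V[X]` is free of rank `n = dim V` and `im D` is
free, of rank `m` say. Since `D² = 0`, rank–nullity gives `rank (ker D ⧸ im D) = n - 2m`, and this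
rank is unchanged by base change to `F(X)`. Evaluation at `0` intertwines `D` with `d₀`, which
gives `d₀² = 0` and puts `im d₀` inside the `F`-span of the values at `0` of a basis of `im D`;
so `rank d₀ ≤ m` and `dim (ker d₀ ⧸ im d₀) = n - 2 rank d₀ ≥ n - 2m`.
-/

open Polynomial PolynomialModule TensorProduct

/-- The homology `ker f ⧸ im f` of a linear endomorphism `f` (with `f ∘ f = 0` in the
intended applications). -/
noncomputable def LinHomology {R : Type*} [CommRing R] {N : Type*} [AddCommGroup N]
    [Module R N] (f : N →ₗ[R] N) : Type _ :=
  ↥(LinearMap.ker f) ⧸ (LinearMap.range f).comap (LinearMap.ker f).subtype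

noncomputable instance {R : Type*} [CommRing R] {N : Type*} [AddCommGroup N]
    [Module R N] (f : N →ₗ[R] N) : AddCommGroup (LinHomology f) :=
  inferInstanceAs (AddCommGroup (↥(LinearMap.ker f) ⧸
    (LinearMap.range f).comap (LinearMap.ker f).subtype))

noncomputable instance {R : Type*} [CommRing R] {N : Type*} [AddCommGroup N]
    [Module R N] (f : N →ₗ[R] N) : Module R (LinHomology f) :=
  inferInstanceAs (Module R (↥(LinearMap.ker f) ⧸
    (LinearMap.range f).comap (LinearMap.ker f).subtype))

/-- The map `d₀ : V → V`, `x ↦` the degree-`0` coefficient of `D (ι x)`, as an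
`F`-linear map. -/
noncomputable def dZero (F : Type*) [Field F] (V : Type*) [AddCommGroup V] [Module F V]
    (D : PolynomialModule F V →ₗ[Polynomial F] PolynomialModule F V) : V →ₗ[F] V where
  toFun x := (D (PolynomialModule.lsingle F 0 x)).coeff 0
  map_add' x y := by simp [map_add, PolynomialModule.coeff_add]
  map_smul' c x := by
    have h1 : PolynomialModule.lsingle F 0 (c • x) =
        c • PolynomialModule.lsingle F 0 x := map_smul _ _ _
    show (D (PolynomialModule.lsingle F 0 (c • x))).coeff 0 = c • (D (PolynomialModule.lsingle F 0 x)).coeff 0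
    rw [h1, LinearMap.map_smul_of_tower]
    rfl

open Module

namespace PolynomialModule

variable {R M N : Type*} [CommRing R] [AddCommGroup M] [Module R M] [AddCommGroup N] [Module R N]

instance [Module.Free R M] : Module.Free R[X] (PolynomialModule R M) :=
  .of_equiv (polynomialTensorProductLEquivPolynomialModule R M)

instance [Module.Finite R M] : Module.Finite R[X] (PolynomialModule R M) :=
  .equiv (polynomialTensorProductLEquivPolynomialModule R M)

theorem finrank_polynomialModule [Nontrivial R] [Module.Free R M] :
    finrank R[X] (PolynomialModule R M) = finrank R M :=
  (polynomialTensorProductLEquivPolynomialModule R M).finrank_eq.symm.trans finrank_baseChange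

theorem eval_zero_eq_coeff_zero (q : PolynomialModule R M) : eval 0 q = q.coeff 0 := by
  induction q using induction_linear with
  | zero => simp
  | add p q hp hq => simp [hp, hq]
  | single i m => cases i <;> simp

theorem single_eq_monomial_smul (i : ℕ) (m : M) :
    single R i m = monomial i (1 : R) • single R 0 m := by
  rw [monomial_smul_single, add_zero, one_smul]

theorem eval_apply_single_eval (D : PolynomialModule R M →ₗ[R[X]] PolynomialModule R N) (r : R)
    (q : PolynomialModule R M) : eval r (D (single R 0 (eval r q))) = eval r (D q) := by
  induction q using induction_linear with
  | zero => simp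
  | add p q hp hq => simp only [map_add, single_add, hp, hq]
  | single i m =>
    rw [eval_single, single_smul, LinearMap.map_smul_of_tower, LinearMap.map_smul,
      single_eq_monomial_smul i, LinearMap.map_smul, eval_smul, eval_monomial, one_mul]

theorem finrank_map_eval_le [Nontrivial R] (r : R) (P : Submodule R[X] (PolynomialModule R M))
    [Module.Free R[X] P] [Module.Finite R[X] P] :
    finrank R ((P.restrictScalars R).map (eval r)) ≤ finrank R[X] P := by
  let b := Module.Free.chooseBasis R[X] P
  have hle : (P.restrictScalars R).map (eval r) ≤
      Submodule.span R (Set.range fun i => eval r (b i : PolynomialModule R M)) := by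
    rintro _ ⟨q, hq, rfl⟩
    have hq := congrArg (fun x : P => eval r (x : PolynomialModule R M)) (b.sum_repr ⟨q, hq⟩)
    simp only [Submodule.coe_sum, Submodule.coe_smul, map_sum, eval_smul] at hq
    rw [← hq]
    exact Submodule.sum_mem _ fun i _ =>
      Submodule.smul_mem _ _ (Submodule.subset_span ⟨i, rfl⟩)
  have := Module.Finite.span_of_finite R
    (Set.finite_range fun i => eval r (b i : PolynomialModule R M))
  calc finrank R ((P.restrictScalars R).map (eval r))
      ≤ finrank R (Submodule.span R (Set.range fun i => eval r (b i : PolynomialModule R M))) :=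
        Submodule.finrank_mono hle
    _ ≤ Fintype.card (Module.Free.ChooseBasisIndex R[X] P) := finrank_range_le_card _
    _ = finrank R[X] P := (finrank_eq_card_chooseBasisIndex R[X] P).symm

end PolynomialModule

universe u in
theorem LinHomology.finrank_add_two_mul_finrank_range {R : Type*} {N : Type u} [CommRing R]
    [AddCommGroup N] [Module R N] [HasRankNullity.{u} R] [IsNoetherian R N] (f : N →ₗ[R] N)
    (hf : f ∘ₗ f = 0) :
    finrank R (LinHomology f) + 2 * finrank R (LinearMap.range f) = finrank R N := by
  have := nontrivial_of_hasRankNullity (R := R)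
  have hrk : LinearMap.range f ≤ LinearMap.ker f := LinearMap.range_le_ker_iff.mpr hf
  have hker : finrank R (LinHomology f) + finrank R (LinearMap.range f) =
      finrank R (LinearMap.ker f) := by
    rw [← (Submodule.comapSubtypeEquivOfLe hrk).finrank_eq]
    exact Submodule.finrank_quotient_add_finrank _
  have hN : finrank R (LinearMap.range f) + finrank R (LinearMap.ker f) = finrank R N := by
    rw [← f.quotKerEquivRange.finrank_eq]
    exact Submodule.finrank_quotient_add_finrank _
  omega

section dZero

variable {F : Type*} [Field F] {V : Type*} [AddCommGroup V] [Module F V]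
  (D : PolynomialModule F V →ₗ[F[X]] PolynomialModule F V)

theorem dZero_apply (x : V) : dZero F V D x = eval 0 (D (single F 0 x)) :=
  (eval_zero_eq_coeff_zero _).symm

theorem dZero_apply_eval (q : PolynomialModule F V) : dZero F V D (eval 0 q) = eval 0 (D q) := by
  rw [dZero_apply, eval_apply_single_eval]

theorem dZero_comp_dZero (hD : D ∘ₗ D = 0) : dZero F V D ∘ₗ dZero F V D = 0 := by
  ext x
  rw [LinearMap.comp_apply, dZero_apply D x, dZero_apply_eval, ← LinearMap.comp_apply D D, hD,
    LinearMap.zero_apply, map_zero, LinearMap.zero_apply]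

theorem range_dZero_le :
    LinearMap.range (dZero F V D) ≤ ((LinearMap.range D).restrictScalars F).map (eval 0) := by
  rintro _ ⟨x, rfl⟩
  exact ⟨_, LinearMap.mem_range_self D _, (dZero_apply D x).symm⟩

end dZero

/-- For a finite-dimensional `F`-vector space `V` and an `F[X]`-linear
`D : V[X] → V[X]` with `D ∘ D = 0`, the degree-zero part `d₀` of `D` satisfies
`d₀ ∘ d₀ = 0` and `dim_F (ker d₀ ⧸ im d₀) ≥ rank_{F[X]} (ker D ⧸ im D)`. -/
theorem finrank_homology_dZero_ge (F : Type*) [Field F] (V : Type*) [AddCommGroup V]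
    [Module F V] [FiniteDimensional F V]
    (D : PolynomialModule F V →ₗ[Polynomial F] PolynomialModule F V)
    (hD : D ∘ₗ D = 0) :
    (dZero F V D) ∘ₗ (dZero F V D) = 0 ∧
      Module.finrank (FractionRing (Polynomial F))
          (FractionRing (Polynomial F) ⊗[Polynomial F] LinHomology D) ≤
        Module.finrank F (LinHomology (dZero F V D)) := by
  refine ⟨dZero_comp_dZero D hD, ?_⟩
  have hR := LinHomology.finrank_add_two_mul_finrank_range D hD
  have hF := LinHomology.finrank_add_two_mul_finrank_range _ (dZero_comp_dZero D hD)
  have hrank := (Submodule.finrank_mono (range_dZero_le D)).trans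
    (finrank_map_eval_le 0 (LinearMap.range D))
  rw [finrank_polynomialModule] at hR
  rw [(TensorProduct.isBaseChange F[X] (LinHomology D) (FractionRing F[X])).finrank_eq]
  omega
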